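/- arXiv:1305.7252 — 2 statements merged into one kernel-verified Lean document; each statement's English description precedes it below -/
import Mathlib

section
/- Let $X_1,\ldots,X_r$ be independent random variables, each exponentially distributed with rate $1$. Let $\mu_1 > 0$ and $\mu_2,\ldots,\mu_r \le 0$ be real numbers. Then for every $c \ge 0$, $\;\mathbb{P}\big(\sum_{i=1}^r \mu_i X_i > c\big) = \dfrac{e^{-c/\mu_1}}{\prod_{i=2}^r \big(1 - \mu_i/\mu_1\big)}$. -/
/-!
If `ℙ(S > u) = C e^{-u/m}` for all `u ≥ 0` and `Y ~ Exp(1)` is independent of `S`, then for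
`a ≤ 0` and `t ≥ 0` conditioning on `Y` keeps the threshold `t - aY` nonnegative, so
`ℙ(S + aY > t) = C e^{-t/m} 𝔼[e^{aY/m}] = C e^{-t/m} / (1 - a/m)`. Starting from the tail
`e^{-t/μ₁}` of `μ₁X₁` and adding the terms `μᵢXᵢ` one at a time gives the formula.
-/

open MeasureTheory ProbabilityTheory Finset Real Set

lemma setLIntegral_Ioi_exp_mul_expMeasure_one {a u : ℝ} (ha : a < 1) (hu : 0 ≤ u) :
    ∫⁻ x in Ioi u, ENNReal.ofReal (exp (a * x)) ∂expMeasure 1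
      = ENNReal.ofReal (exp (-(1 - a) * u) / (1 - a)) := by
  have hdensity : ∀ x ∈ Ioi u, (exponentialPDF 1 * fun x => ENNReal.ofReal (exp (a * x))) x
      = ENNReal.ofReal (exp ((a - 1) * x)) := by
    intro x hx
    rw [Pi.mul_apply, exponentialPDF_of_nonneg (hu.trans hx.le), one_mul,
      ← ENNReal.ofReal_mul (by positivity), ← exp_add]
    congr 2
    ring
  rw [show expMeasure 1 = volume.withDensity (exponentialPDF 1) from rfl,
    setLIntegral_withDensity_eq_setLIntegral_mul _ (f := exponentialPDF 1)
      (measurable_exponentialPDFReal 1).ennreal_ofReal (by fun_prop) measurableSet_Ioi,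
    setLIntegral_congr_fun measurableSet_Ioi hdensity,
    ← ofReal_integral_eq_lintegral_ofReal (integrableOn_exp_mul_Ioi (by linarith) u)
      (ae_of_all _ fun x => (exp_pos _).le),
    integral_exp_mul_Ioi (by linarith)]
  congr 1
  rw [neg_div, ← div_neg, neg_sub, neg_sub]

lemma expMeasure_one_Ioi {u : ℝ} (hu : 0 ≤ u) :
    expMeasure 1 (Ioi u) = ENNReal.ofReal (exp (-u)) := by
  simpa using setLIntegral_Ioi_exp_mul_expMeasure_one zero_lt_one hu

lemma ae_pos_expMeasure_one : ∀ᵐ x ∂expMeasure 1, x ∈ Ioi (0 : ℝ) := by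
  have := isProbabilityMeasure_expMeasure zero_lt_one
  rw [ae_iff]
  simp only [Set.mem_Ioi, not_lt]
  change expMeasure 1 (Iic 0) = 0
  rw [← ofReal_cdf, cdf_expMeasure_eq zero_lt_one]
  simp

lemma lintegral_exp_mul_expMeasure_one {a : ℝ} (ha : a < 1) :
    ∫⁻ x, ENNReal.ofReal (exp (a * x)) ∂expMeasure 1 = ENNReal.ofReal (1 / (1 - a)) := by
  rw [← Measure.restrict_eq_self_of_ae_mem ae_pos_expMeasure_one,
    setLIntegral_Ioi_exp_mul_expMeasure_one ha le_rfl]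
  simp

section

variable {Ω : Type*} [MeasurableSpace Ω] {P : Measure Ω}

lemma measure_lt_add_mul_of_indepFun_expMeasure_one [IsFiniteMeasure P] {S Y : Ω → ℝ}
    (hS : Measurable S) (hY : Measurable Y) (hSY : IndepFun S Y P) (hYlaw : P.map Y = expMeasure 1)
    {m K a : ℝ} (hm : 0 < m) (ha : a ≤ 0)
    (htail : ∀ u, 0 ≤ u → P {ω | u < S ω} = ENNReal.ofReal (exp (-u / m) / K))
    {t : ℝ} (ht : 0 ≤ t) :
    P {ω | t < S ω + a * Y ω} = ENNReal.ofReal (exp (-t / m) / K / (1 - a / m)) := by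
  set E : Set (ℝ × ℝ) := {p | t < p.1 + a * p.2}
  have hE : MeasurableSet E := measurableSet_lt measurable_const (by fun_prop)
  have hslice : ∀ᵐ y ∂expMeasure 1, P.map S ((fun x => (x, y)) ⁻¹' E)
      = ENNReal.ofReal (exp (-t / m) / K) * ENNReal.ofReal (exp (a / m * y)) := by
    filter_upwards [ae_pos_expMeasure_one] with y hy
    have hpre : S ⁻¹' ((fun x => (x, y)) ⁻¹' E) = {ω | t - a * y < S ω} := by
      ext ω
      simp [E, sub_lt_iff_lt_add]
    rw [Measure.map_apply hS (hE.preimage measurable_prodMk_right), hpre,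
      htail _ (by nlinarith [mem_Ioi.1 hy]), ← ENNReal.ofReal_mul' (exp_pos _).le,
      div_mul_eq_mul_div, ← exp_add]
    congr 3
    field_simp
    ring
  have hlaw : P.map (fun ω => (S ω, Y ω)) = (P.map S).prod (expMeasure 1) := by
    rw [← hYlaw]
    exact (indepFun_iff_map_prod_eq_prod_map_map hS.aemeasurable hY.aemeasurable).1 hSY
  have ham : a / m ≤ 0 := div_nonpos_of_nonpos_of_nonneg ha hm.le
  calc P {ω | t < S ω + a * Y ω} = P.map (fun ω => (S ω, Y ω)) E := by
        rw [Measure.map_apply (hS.prodMk hY) hE]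
        rfl
    _ = ∫⁻ y, P.map S ((fun x => (x, y)) ⁻¹' E) ∂expMeasure 1 := by
        have := isProbabilityMeasure_expMeasure zero_lt_one
        rw [hlaw, Measure.prod_apply_symm hE]
    _ = ∫⁻ y, ENNReal.ofReal (exp (-t / m) / K) * ENNReal.ofReal (exp (a / m * y))
          ∂expMeasure 1 := lintegral_congr_ae hslice
    _ = ENNReal.ofReal (exp (-t / m) / K / (1 - a / m)) := by
        rw [lintegral_const_mul _ (by fun_prop), lintegral_exp_mul_expMeasure_one (by linarith),
          ← ENNReal.ofReal_mul' (one_div_pos.2 (by linarith)).le, mul_one_div]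

lemma indepFun_sum_mul_of_notMem {ι : Type*} [DecidableEq ι] {X : ι → Ω → ℝ}
    (hmeas : ∀ i, Measurable (X i)) (hindep : iIndepFun X P) (μ : ι → ℝ) {s : Finset ι} {j : ι}
    (hj : j ∉ s) : IndepFun (fun ω => ∑ i ∈ s, μ i * X i ω) (X j) P := by
  have h := (hindep.indepFun_finset s {j} (disjoint_singleton_right.2 hj) hmeas).comp
    (φ := fun v : s → ℝ => ∑ i : s, μ i * v i)
    (ψ := fun v : ({j} : Finset ι) → ℝ => v ⟨j, mem_singleton_self j⟩)
    (Finset.measurable_sum _ fun i _ => (measurable_pi_apply i).const_mul _)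
    (measurable_pi_apply (X := fun _ => ℝ) _)
  convert h using 1
  · ext ω
    exact (sum_coe_sort s fun i => μ i * X i ω).symm
  · rfl

lemma measure_lt_mul_add_sum_of_iIndepFun [IsFiniteMeasure P] {ι : Type*} [DecidableEq ι]
    {X : ι → Ω → ℝ} (hmeas : ∀ i, Measurable (X i)) (hindep : iIndepFun X P)
    (hlaw : ∀ i, P.map (X i) = expMeasure 1) {μ : ι → ℝ} {i₀ : ι} (hμ₀ : 0 < μ i₀)
    {s : Finset ι} (hi₀ : i₀ ∉ s) (hμ : ∀ i ∈ s, μ i ≤ 0) {t : ℝ} (ht : 0 ≤ t) :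
    P {ω | t < μ i₀ * X i₀ ω + ∑ i ∈ s, μ i * X i ω}
      = ENNReal.ofReal (exp (-t / μ i₀) / ∏ i ∈ s, (1 - μ i / μ i₀)) := by
  induction s using Finset.induction_on generalizing t with
  | empty =>
    have hset : {ω | t < μ i₀ * X i₀ ω} = X i₀ ⁻¹' Ioi (t / μ i₀) := by
      ext ω
      simp [div_lt_iff₀' hμ₀]
    simp only [Finset.sum_empty, add_zero, Finset.prod_empty, div_one]
    rw [hset, ← Measure.map_apply (hmeas i₀) measurableSet_Ioi, hlaw,
      expMeasure_one_Ioi (div_nonneg ht hμ₀.le), neg_div]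
  | insert j s hj ih =>
    have hj₀ : j ≠ i₀ := fun h => hi₀ (h ▸ mem_insert_self j s)
    have hsplit : ∀ ω, μ i₀ * X i₀ ω + ∑ i ∈ insert j s, μ i * X i ω
        = (μ i₀ * X i₀ ω + ∑ i ∈ s, μ i * X i ω) + μ j * X j ω := by
      intro ω
      rw [sum_insert hj]
      ring
    have hS : IndepFun (fun ω => μ i₀ * X i₀ ω + ∑ i ∈ s, μ i * X i ω) (X j) P := by
      simpa only [sum_insert fun h => hi₀ (mem_insert_of_mem h)] using
        indepFun_sum_mul_of_notMem hmeas hindep μ (s := insert i₀ s)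
          (mt mem_insert.1 (not_or.2 ⟨hj₀, hj⟩))
    simp_rw [hsplit]
    rw [prod_insert hj, mul_comm, ← div_div]
    exact measure_lt_add_mul_of_indepFun_expMeasure_one (by fun_prop) (hmeas j) hS (hlaw j) hμ₀
      (hμ j (mem_insert_self j s))
      (fun u hu => ih (fun h => hi₀ (mem_insert_of_mem h))
        (fun i hi => hμ i (mem_insert_of_mem hi)) hu) ht

end

/-- If `X 0, …, X (r-1)` are i.i.d. rate-1 exponential random variables,
`μ 0 > 0` and `μ i ≤ 0` for `i ≠ 0`, then
`ℙ(∑ i, μ i * X i > c) = exp (-c / μ 0) / ∏_{i ≠ 0} (1 - μ i / μ 0)` for all `c ≥ 0`. -/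
theorem stmt_5 {Ω : Type*} [MeasurableSpace Ω] (Pr : Measure Ω) [IsProbabilityMeasure Pr]
    (r : ℕ) (hr : 0 < r) (X : Fin r → Ω → ℝ)
    (hmeas : ∀ i, Measurable (X i))
    (hindep : iIndepFun X Pr)
    (hdist : ∀ i, Measure.map (X i) Pr = expMeasure 1)
    (μ : Fin r → ℝ) (hμ1 : 0 < μ ⟨0, hr⟩)
    (hμ : ∀ i : Fin r, i ≠ ⟨0, hr⟩ → μ i ≤ 0)
    (c : ℝ) (hc : 0 ≤ c) :
    Pr {ω | c < ∑ i, μ i * X i ω}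
      = ENNReal.ofReal
          (Real.exp (-c / μ ⟨0, hr⟩) /
            ∏ i ∈ Finset.univ.erase ⟨0, hr⟩, (1 - μ i / μ ⟨0, hr⟩)) := by
  simp_rw [← add_sum_erase univ (fun i => μ i * X i _) (mem_univ ⟨0, hr⟩)]
  exact measure_lt_mul_add_sum_of_iIndepFun hmeas hindep hdist hμ1 (notMem_erase _ _)
    (fun i hi => hμ i (ne_of_mem_erase hi)) hc
end

section
/- Let $r \ge 1$, $\rho > 0$, and $\mu^* > 0$. Let $\mu_1,\ldots,\mu_r : (0,\infty) \to \mathbb{R}$ be differentiable functions with $\mu_1(x) > 0$ and $\mu_i(x) < \mu_1(x)$ for all $x$ and all $i \ge 2$. Assume that as $x \to \infty$: (i) $\mu_1(x) \to \mu^*$; (ii) $x\,\mu_1'(x) \to 0$; and (iii) for each $i \ge 2$, $\dfrac{\mu_i(x)\,\mu_1'(x)}{\mu_1(x) - \mu_i(x)} \to 0$ and $\dfrac{\mu_i'(x)\,\mu_1(x)}{\mu_1(x) - \mu_i(x)} \to 0$. Define $F(x) = 1 - \dfrac{e^{-x/(\rho\,\mu_1(x))}}{\prod_{i=2}^r \big(1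 - \mu_i(x)/\mu_1(x)\big)}$ and the growth function $g(x) = \dfrac{1 - F(x)}{F'(x)}$. Then $\lim_{x \to \infty} g(x) = \rho\,\mu^*$. -/
/-!
Writing `1 - F = exp (-Λ)` with the cumulative hazard
`Λ x = x / (ρ μ₁ x) + ∑_{i ≥ 2} log (1 - μᵢ x / μ₁ x)`, the growth function is `1 / Λ'`.
Differentiating, `Λ' = (μ₁ - x μ₁') / (ρ μ₁²) + ∑_{i ≥ 2} (μᵢ μ₁' - μᵢ' μ₁) / ((μ₁ - μᵢ) μ₁)`,
and the hypotheses on the eigenvalues are exactly what makes every term but `1 / (ρ μ₁)` vanish,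
so `Λ' → 1 / (ρ μ*)`.
-/

open Filter Finset Real Topology

noncomputable section

def growthFn (F : ℝ → ℝ) (x : ℝ) : ℝ := (1 - F x) / deriv F x

theorem tendsto_growthFn_of_eventuallyEq_one_sub_exp_neg {F Λ Λ' : ℝ → ℝ} {c : ℝ} (hc : c ≠ 0)
    (hF : ∀ᶠ x in atTop, F =ᶠ[𝓝 x] fun y => 1 - exp (-Λ y))
    (hΛ : ∀ᶠ x in atTop, HasDerivAt Λ (Λ' x) x) (hΛ' : Tendsto Λ' atTop (𝓝 c)) :
    Tendsto (growthFn F) atTop (𝓝 c⁻¹) := by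
  refine (hΛ'.inv₀ hc).congr' ?_
  filter_upwards [hF, hΛ] with x hFx hΛx
  have hderiv : deriv F x = exp (-Λ x) * Λ' x := by
    have hG : HasDerivAt (fun y => 1 - exp (-Λ y)) (-(exp (-Λ x) * -Λ' x)) x :=
      hΛx.neg.exp.const_sub 1
    rw [hFx.deriv_eq, hG.deriv]
    ring
  rw [growthFn, hderiv, hFx.eq_of_nhds, sub_sub_cancel, div_mul_cancel_left₀ (exp_pos _).ne']

theorem exp_neg_add_sum_log {ι : Type*} (s : Finset ι) (a : ℝ) {b : ι → ℝ}
    (hb : ∀ i ∈ s, 0 < b i) :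
    exp (-(a + ∑ i ∈ s, log (b i))) = exp (-a) / ∏ i ∈ s, b i := by
  rw [neg_add, exp_add, exp_neg (∑ i ∈ s, _), exp_sum, prod_congr rfl fun i hi => exp_log (hb i hi),
    div_eq_mul_inv]

theorem hasDerivAt_id_div_const_mul {g : ℝ → ℝ} {g' x : ℝ} (ρ : ℝ) (hg : HasDerivAt g g' x)
    (hρg : ρ * g x ≠ 0) :
    HasDerivAt (fun y => y / (ρ * g y)) ((g x - x * g') / (ρ * g x ^ 2)) x := by
  have hρ : ρ ≠ 0 := left_ne_zero_of_mul hρg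
  have hgx : g x ≠ 0 := right_ne_zero_of_mul hρg
  refine ((hasDerivAt_id' x).fun_div (hg.const_mul ρ) hρg).congr_deriv ?_
  field_simp

theorem hasDerivAt_log_one_sub_div {f g : ℝ → ℝ} {f' g' x : ℝ} (hf : HasDerivAt f f' x)
    (hg : HasDerivAt g g' x) (hgx : g x ≠ 0) (hfg : f x ≠ g x) :
    HasDerivAt (fun y => log (1 - f y / g y))
      ((f x * g' / (g x - f x) - f' * g x / (g x - f x)) / g x) x := by
  have hsub : g x - f x ≠ 0 := sub_ne_zero.2 hfg.symm
  have hfac : 1 - f x / g x ≠ 0 := by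
    rw [one_sub_div hgx]
    exact div_ne_zero hsub hgx
  convert ((hf.fun_div hg hgx).const_sub 1).log hfac using 1
  field_simp
  ring

section CumulativeHazard

variable {ι : Type*} (ρ : ℝ) (m : ℝ → ℝ) (ν : ι → ℝ → ℝ) (S : Finset ι)

/-- `m` plays the role of the largest eigenvalue `μ₁` and `ν i`, `i ∈ S`, of the others. -/
def cumHazard (x : ℝ) : ℝ := x / (ρ * m x) + ∑ i ∈ S, log (1 - ν i x / m x)

def cumHazardDeriv (x : ℝ) : ℝ :=
  (m x - x * deriv m x) / (ρ * m x ^ 2) +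
    ∑ i ∈ S, (ν i x * deriv m x / (m x - ν i x) - deriv (ν i) x * m x / (m x - ν i x)) / m x

variable {ρ m ν S}

theorem exp_neg_cumHazard {x : ℝ} (hν : ∀ i ∈ S, 0 < 1 - ν i x / m x) :
    exp (-cumHazard ρ m ν S x) = exp (-x / (ρ * m x)) / ∏ i ∈ S, (1 - ν i x / m x) := by
  rw [cumHazard, exp_neg_add_sum_log S _ hν, neg_div]

theorem hasDerivAt_cumHazard {x : ℝ} (hρ : ρ ≠ 0) (hmx : m x ≠ 0) (hm : DifferentiableAt ℝ m x)
    (hν : ∀ i ∈ S, DifferentiableAt ℝ (ν i) x) (hνm : ∀ i ∈ S, ν i x ≠ m x) :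
    HasDerivAt (cumHazard ρ m ν S) (cumHazardDeriv ρ m ν S x) x :=
  (hasDerivAt_id_div_const_mul ρ hm.hasDerivAt (mul_ne_zero hρ hmx)).add <|
    HasDerivAt.fun_sum fun i hi =>
      hasDerivAt_log_one_sub_div (hν i hi).hasDerivAt hm.hasDerivAt hmx (hνm i hi)

theorem tendsto_cumHazardDeriv {μstar : ℝ} (hρ : ρ ≠ 0) (hμstar : μstar ≠ 0)
    (hm : Tendsto m atTop (𝓝 μstar)) (hm' : Tendsto (fun x => x * deriv m x) atTop (𝓝 0))
    (hν : ∀ i ∈ S, Tendsto (fun x => ν i x * deriv m x / (m x - ν i x)) atTop (𝓝 0))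
    (hν' : ∀ i ∈ S, Tendsto (fun x => deriv (ν i) x * m x / (m x - ν i x)) atTop (𝓝 0)) :
    Tendsto (cumHazardDeriv ρ m ν S) atTop (𝓝 (ρ * μstar)⁻¹) := by
  have hmain := (hm.sub hm').div (tendsto_const_nhds.mul (hm.pow 2)) (by positivity)
  have hsum := tendsto_finsetSum S fun i hi => ((hν i hi).sub (hν' i hi)).div hm hμstar
  have hvalue : (ρ * μstar)⁻¹ = (μstar - 0) / (ρ * μstar ^ 2) + ∑ i ∈ S, (0 - 0) / μstar := by
    simp only [sub_zero, sub_self, zero_div, sum_const_zero, add_zero]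
    field_simp
  rw [hvalue]
  exact hmain.add hsum

end CumulativeHazard

/-- The growth function `g = (1 - F)/F'` of the SINR CDF
`F x = 1 - exp (-x/(ρ μ₁ x)) / ∏_{i≥2} (1 - μᵢ x / μ₁ x)` converges to `ρ μ*`
as `x → ∞`, under the stated limit assumptions on the eigenvalue functions. -/
theorem stmt_6 (r : ℕ) (hr : 0 < r) (ρ μstar : ℝ) (hρ : 0 < ρ) (hμstar : 0 < μstar)
    (μ : Fin r → ℝ → ℝ)
    (hdiff : ∀ i, DifferentiableOn ℝ (μ i) (Set.Ioi (0 : ℝ)))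
    (hpos : ∀ x > (0 : ℝ), 0 < μ ⟨0, hr⟩ x)
    (hlt : ∀ x > (0 : ℝ), ∀ i : Fin r, i ≠ ⟨0, hr⟩ → μ i x < μ ⟨0, hr⟩ x)
    (h1 : Tendsto (μ ⟨0, hr⟩) atTop (nhds μstar))
    (h2 : Tendsto (fun x => x * deriv (μ ⟨0, hr⟩) x) atTop (nhds 0))
    (h3 : ∀ i : Fin r, i ≠ ⟨0, hr⟩ →
      Tendsto (fun x => μ i x * deriv (μ ⟨0, hr⟩) x / (μ ⟨0, hr⟩ x - μ i x))
        atTop (nhds 0))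
    (h4 : ∀ i : Fin r, i ≠ ⟨0, hr⟩ →
      Tendsto (fun x => deriv (μ i) x * μ ⟨0, hr⟩ x / (μ ⟨0, hr⟩ x - μ i x))
        atTop (nhds 0))
    (F : ℝ → ℝ)
    (hF : F = fun x => 1 - Real.exp (-x / (ρ * μ ⟨0, hr⟩ x)) /
        ∏ i ∈ Finset.univ.erase ⟨0, hr⟩, (1 - μ i x / μ ⟨0, hr⟩ x)) :
    Tendsto (fun x => (1 - F x) / deriv F x) atTop (nhds (ρ * μstar)) := by
  set i₀ : Fin r := ⟨0, hr⟩
  set S := univ.erase i₀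
  have hdiffAt : ∀ i, ∀ x > (0 : ℝ), DifferentiableAt ℝ (μ i) x := fun i x hx =>
    (hdiff i).differentiableAt (Ioi_mem_nhds hx)
  have hfac : ∀ x > (0 : ℝ), ∀ i ∈ S, 0 < 1 - μ i x / μ i₀ x := fun x hx i hi =>
    sub_pos.2 ((div_lt_one (hpos x hx)).2 (hlt x hx i (ne_of_mem_erase hi)))
  have hF_exp : ∀ᶠ x in atTop,
      F =ᶠ[𝓝 x] fun y => 1 - exp (-cumHazard ρ (μ i₀) μ S y) := by
    filter_upwards [eventually_gt_atTop 0] with x hx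
    filter_upwards [Ioi_mem_nhds hx] with y hy
    rw [hF, exp_neg_cumHazard (hfac y hy)]
  have hderiv : ∀ᶠ x in atTop, HasDerivAt (cumHazard ρ (μ i₀) μ S)
      (cumHazardDeriv ρ (μ i₀) μ S x) x := by
    filter_upwards [eventually_gt_atTop 0] with x hx
    exact hasDerivAt_cumHazard hρ.ne' (hpos x hx).ne' (hdiffAt i₀ x hx)
      (fun i _ => hdiffAt i x hx) fun i hi => (hlt x hx i (ne_of_mem_erase hi)).ne
  have hlim := tendsto_cumHazardDeriv (S := S) hρ.ne' hμstar.ne' h1 h2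
    (fun i hi => h3 i (ne_of_mem_erase hi)) fun i hi => h4 i (ne_of_mem_erase hi)
  have := tendsto_growthFn_of_eventuallyEq_one_sub_exp_neg
    (inv_ne_zero (mul_pos hρ hμstar).ne') hF_exp hderiv hlim
  rwa [inv_inv] at this
end
end
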